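/- Let t < 0 be a real scale and let h = (a,b) ∈ ℍ_t with a = x + y·i (x, y ∈ ℝ). Then there exists an invertible element q ∈ ℍ_t (i.e. q has a two-sided ·_t-inverse) such that q⁻¹ ·_t h ·_t q = (x + i·√(y² − t·|b|²), 0) in ℍ_t; that is, every t-scaled hypercomplex number is similar in ℍ_t to the element (σ_t(h), 0) built from its t-spectral value. -/

import Mathlib

noncomputable section

open ComplexConjugate

/-- The `t`-scaled vector multiplication on `ℂ × ℂ` (the ring `ℍ_t`). -/
def hmul (t : ℝ) (h₁ h₂ : ℂ × ℂ) : ℂ × ℂ :=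
  (h₁.1 * h₂.1 + (t : ℂ) * h₁.2 * conj h₂.2, h₁.1 * h₂.2 + h₁.2 * conj h₂.1)

/-- The realization `π_t : ℍ_t → M₂(ℂ)`. -/
def pit (t : ℝ) (h : ℂ × ℂ) : Matrix (Fin 2) (Fin 2) ℂ :=
  !![h.1, (t : ℂ) * h.2; conj h.2, conj h.1]

/-- The hypercomplex conjugate `(a,b)† = (conj a, -b)`. -/
def hdag (h : ℂ × ℂ) : ℂ × ℂ := (conj h.1, -h.2)

/-- The linear functional `τ((a,b)) = Re a`, composed with `·_t`-multiplication:
the bilinear form `⟨h₁,h₂⟩_t = τ(h₁ ·_t h₂†)`. -/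
def hform (t : ℝ) (h₁ h₂ : ℂ × ℂ) : ℝ := (hmul t h₁ (hdag h₂)).1.re

/-! For `q = (a, b)`, `q ·_t q† = q† ·_t q = (|a|² - t|b|², 0)`, so `q` is invertible as soon as
this `t`-norm is nonzero, which for `t < 0` holds for every `q ≠ 0`. It then suffices to find
`q ≠ 0` with `h ·_t q = q ·_t (x + i s, 0)`, where `s² = y² - t|b|²`: the element `q = (s + y, i b)`
does this unless `s + y = 0`, and then `b = 0` and `q = (0, 1)` does. -/

section

variable {t : ℝ}

def hnormSq (t : ℝ) (q : ℂ × ℂ) : ℝ := Complex.normSq q.1 - t * Complex.normSq q.2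

def hinv (t : ℝ) (q : ℂ × ℂ) : ℂ × ℂ := (hnormSq t q)⁻¹ • hdag q

theorem hmul_assoc (p q r : ℂ × ℂ) : hmul t (hmul t p q) r = hmul t p (hmul t q r) := by
  simp only [hmul, map_add, map_mul, Complex.conj_ofReal, Complex.conj_conj]
  ext <;> ring

theorem one_hmul (p : ℂ × ℂ) : hmul t (1, 0) p = p := by
  simp [hmul]

theorem hmul_real_smul (r : ℝ) (p q : ℂ × ℂ) : hmul t p (r • q) = r • hmul t p q := by
  simp only [hmul, Prod.smul_fst, Prod.smul_snd, Complex.real_smul, map_mul, Complex.conj_ofReal,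
    Prod.smul_mk]
  ext <;> ring

theorem real_smul_hmul (r : ℝ) (p q : ℂ × ℂ) : hmul t (r • p) q = r • hmul t p q := by
  simp only [hmul, Prod.smul_fst, Prod.smul_snd, Complex.real_smul, Prod.smul_mk]
  ext <;> ring

theorem hmul_hdag_self (q : ℂ × ℂ) : hmul t q (hdag q) = ((hnormSq t q : ℂ), 0) := by
  simp only [hmul, hdag, hnormSq, map_neg, Complex.conj_conj, Complex.ofReal_sub,
    Complex.ofReal_mul, ← Complex.mul_conj]
  ext <;> ring

theorem hdag_hmul_self (q : ℂ × ℂ) : hmul t (hdag q) q = ((hnormSq t q : ℂ), 0) := by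
  simp only [hmul, hdag, hnormSq, Complex.ofReal_sub, Complex.ofReal_mul, ← Complex.mul_conj]
  ext <;> ring

theorem hmul_hinv {q : ℂ × ℂ} (hq : hnormSq t q ≠ 0) : hmul t q (hinv t q) = (1, 0) := by
  rw [hinv, hmul_real_smul, hmul_hdag_self]
  simp [Complex.real_smul, hq]

theorem hinv_hmul {q : ℂ × ℂ} (hq : hnormSq t q ≠ 0) : hmul t (hinv t q) q = (1, 0) := by
  rw [hinv, real_smul_hmul, hdag_hmul_self]
  simp [Complex.real_smul, hq]

theorem hnormSq_pos_of_neg (ht : t < 0) {q : ℂ × ℂ} (hq : q ≠ 0) : 0 < hnormSq t q := by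
  obtain ⟨a, b⟩ := q
  have hab : a ≠ 0 ∨ b ≠ 0 := by
    by_contra! h
    exact hq (by simp [h])
  have ha := Complex.normSq_nonneg a
  have hb := Complex.normSq_nonneg b
  simp only [hnormSq]
  rcases hab with h | h <;> nlinarith [Complex.normSq_pos.2 h]

theorem hmul_hmul_eq_of_hmul_eq {q qinv h d : ℂ × ℂ} (hq : hmul t qinv q = (1, 0))
    (hd : hmul t h q = hmul t q d) : hmul t (hmul t qinv h) q = d := by
  rw [hmul_assoc, hd, ← hmul_assoc, hq, one_hmul]

theorem hmul_intertwines_of_sq_eq {x y s : ℝ} {b : ℂ} (hs : s ^ 2 = y ^ 2 - t * Complex.normSq b) :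
    hmul t ((x : ℂ) + y * Complex.I, b) (((s + y : ℝ) : ℂ), Complex.I * b) =
      hmul t (((s + y : ℝ) : ℂ), Complex.I * b) ((x : ℂ) + Complex.I * s, 0) := by
  have hsC : (s : ℂ) ^ 2 = (y : ℂ) ^ 2 - t * (b * conj b) := by
    rw [Complex.mul_conj]; exact_mod_cast hs
  simp only [hmul, map_add, map_mul, map_zero, Complex.conj_ofReal, Complex.conj_I,
    Complex.ofReal_add, Prod.mk.injEq]
  constructor
  · linear_combination -Complex.I * hsC
  · linear_combination (s + y : ℂ) * b * Complex.I_sq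

theorem hmul_intertwines_of_add_eq_zero {x y s : ℝ} (hs : s + y = 0) :
    hmul t ((x : ℂ) + y * Complex.I, 0) (0, 1) = hmul t (0, 1) ((x : ℂ) + Complex.I * s, 0) := by
  have hsC : (s : ℂ) = -y := by rw [eq_neg_iff_add_eq_zero]; exact_mod_cast hs
  simp only [hmul, map_add, map_mul, map_neg, map_one, map_zero, Complex.conj_ofReal,
    Complex.conj_I, hsC, Prod.mk.injEq]
  constructor <;> ring

end

/-- for `t < 0`, every `h = (a,b) ∈ ℍ_t` with `a = x + y i` is similar
in `ℍ_t` to `(σ_t(h), 0) = (x + i √(y² − t|b|²), 0)`. -/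
theorem similar_to_spectral_form_of_neg (t : ℝ) (ht : t < 0) (x y : ℝ) (b : ℂ) :
    ∃ q qinv : ℂ × ℂ,
      hmul t q qinv = (1, 0) ∧ hmul t qinv q = (1, 0) ∧
      hmul t (hmul t qinv ((x : ℂ) + (y : ℂ) * Complex.I, b)) q =
        ((x : ℂ) + Complex.I * ((Real.sqrt (y ^ 2 - t * Complex.normSq b) : ℝ) : ℂ), 0) := by
  set s := Real.sqrt (y ^ 2 - t * Complex.normSq b)
  have hs : s ^ 2 = y ^ 2 - t * Complex.normSq b :=
    Real.sq_sqrt (by nlinarith [Complex.normSq_nonneg b, sq_nonneg y])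
  obtain ⟨q, hq0, hq⟩ : ∃ q : ℂ × ℂ, q ≠ 0 ∧
      hmul t ((x : ℂ) + y * Complex.I, b) q = hmul t q ((x : ℂ) + Complex.I * s, 0) := by
    by_cases hsy : s + y = 0
    · have hb : b = 0 := by
        have : t * Complex.normSq b = 0 := by linear_combination hs + (y - s) * hsy
        simpa [ht.ne] using this
      subst hb
      exact ⟨(0, 1), by simp, hmul_intertwines_of_add_eq_zero hsy⟩
    · exact ⟨_, fun h => hsy (Complex.ofReal_eq_zero.mp (congrArg Prod.fst h)),
        hmul_intertwines_of_sq_eq hs⟩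
  have hN := (hnormSq_pos_of_neg ht hq0).ne'
  exact ⟨q, hinv t q, hmul_hinv hN, hinv_hmul hN, hmul_hmul_eq_of_hmul_eq (hinv_hmul hN) hq⟩
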